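/- For iterative erasure decoding (peeling decoder) on a Tanner graph, the decoder fails to recover exactly the maximal stopping set contained in the set of erased variable nodes; in particular, decoding succeeds completely if and only if the set of erased positions contains no nonempty stopping set. -/

import Mathlib

/-!
A check that lets the decoder recover `v` sees no erased variable other than `v`. If `v` lay in
a stopping set `S'` contained in the erased set, that check would meet `S'` exactly in `{v}`,
which a stopping set forbids; so peeling never touches a stopping set inside the erased set, and
the set at which it halts contains all of them. Halting says precisely that no check meets the
final set in one variable, i.e. that it is itself a stopping set.
-/

/-- A stopping set of a Tanner graph (given by the neighborhood map `N` from
check nodes to finsets of variable nodes). -/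
def IsStoppingSet {V C : Type} [DecidableEq V] (N : C → Finset V) (S : Finset V) : Prop :=
  ∀ c : C, (N c ∩ S).Nonempty → 2 ≤ (N c ∩ S).card

/-- One step of the peeling decoder: some check node is adjacent to exactly one
erased variable node, which is then recovered. -/
def PeelStep {V C : Type} [DecidableEq V] (N : C → Finset V) (E E' : Finset V) : Prop :=
  ∃ c : C, ∃ v : V, N c ∩ E = {v} ∧ E' = E.erase v

section Peeling

variable {V C : Type} [DecidableEq V] {N : C → Finset V} {E E' S S' : Finset V}

theorem isStoppingSet_iff_card_ne_one : IsStoppingSet N S ↔ ∀ c, (N c ∩ S).card ≠ 1 := by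
  refine forall_congr' fun c => ?_
  rw [← Finset.card_pos]
  omega

theorem PeelStep.subset (h : PeelStep N E E') : E' ⊆ E := by
  obtain ⟨c, v, -, rfl⟩ := h
  exact Finset.erase_subset v E

theorem IsStoppingSet.subset_of_peelStep (hS' : IsStoppingSet N S') (hS'E : S' ⊆ E)
    (h : PeelStep N E E') : S' ⊆ E' := by
  obtain ⟨c, v, hcv, rfl⟩ := h
  intro x hx
  refine Finset.mem_erase.2 ⟨?_, hS'E hx⟩
  rintro rfl
  have hxc : x ∈ N c := Finset.mem_of_mem_inter_left (hcv ▸ Finset.mem_singleton_self x)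
  have hsingle : N c ∩ S' = {x} :=
    Finset.Subset.antisymm (hcv ▸ Finset.inter_subset_inter_left hS'E)
      (Finset.singleton_subset_iff.2 (Finset.mem_inter.2 ⟨hxc, hx⟩))
  exact isStoppingSet_iff_card_ne_one.1 hS' c (by rw [hsingle, Finset.card_singleton])

theorem subset_of_reflTransGen_peelStep (h : Relation.ReflTransGen (PeelStep N) E S) :
    S ⊆ E := by
  induction h with
  | refl => exact subset_rfl
  | tail _ hstep ih => exact hstep.subset.trans ih

theorem IsStoppingSet.subset_of_reflTransGen_peelStep (hS' : IsStoppingSet N S')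
    (hS'E : S' ⊆ E) (h : Relation.ReflTransGen (PeelStep N) E S) : S' ⊆ S := by
  induction h with
  | refl => exact hS'E
  | tail _ hstep ih => exact hS'.subset_of_peelStep ih hstep

end Peeling

theorem peeling_decoder_stopping_set {V C : Type} [DecidableEq V]
    (N : C → Finset V) (E S : Finset V)
    (hreach : Relation.ReflTransGen (PeelStep N) E S)
    (hterm : ∀ c : C, (N c ∩ S).card ≠ 1) :
    (S ⊆ E ∧ IsStoppingSet N S ∧
      ∀ S' : Finset V, S' ⊆ E → IsStoppingSet N S' → S' ⊆ S) ∧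
    (S = ∅ ↔ ∀ S' : Finset V, S' ⊆ E → IsStoppingSet N S' → S' = ∅) := by
  have hSE : S ⊆ E := subset_of_reflTransGen_peelStep hreach
  have hS : IsStoppingSet N S := isStoppingSet_iff_card_ne_one.2 hterm
  have hmax : ∀ S' : Finset V, S' ⊆ E → IsStoppingSet N S' → S' ⊆ S :=
    fun _ hS'E hS' => hS'.subset_of_reflTransGen_peelStep hS'E hreach
  refine ⟨⟨hSE, hS, hmax⟩, fun hempty S' hS'E hS' => ?_, fun h => h S hSE hS⟩
  exact Finset.subset_empty.1 (hempty ▸ hmax S' hS'E hS')
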